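/- Consider one producer selling on two markets joined by an undirected link of capacity χ > 0 in each direction, with inverse demands p_1(z_1)=1−z_1 and p_2(z_2)=2−2z_2, cost C(x_{11},x_{12})=(x_{11}+x_{12})^2, and Walrasian welfare. If χ ≥ 1/3, then at every Nash equilibrium the producer's quantities are x* = (4/15, 2/15), the net flow from market 1 to market 2 is 1/3, and the two equilibrium prices are equal: p_1(z*_1) = p_2(z*_2) = 16/15. -/
import Mathlib


noncomputable section

/-- Net consumption in market 1: `z₁ = x₁₁ - (y₁ - y₂)`. -/
def zz1 (x11 x12 y1 y2 : ℝ) : ℝ := x11 - (y1 - y2)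

/-- Net consumption in market 2: `z₂ = x₁₂ + (y₁ - y₂)`. -/
def zz2 (x11 x12 y1 y2 : ℝ) : ℝ := x12 + (y1 - y2)

/-- Producer's utility with demands `p₁(z)=1-z`, `p₂(z)=2-2z` and cost `(x₁₁+x₁₂)²`. -/
def uP (x11 x12 y1 y2 : ℝ) : ℝ :=
  x11 * (1 - zz1 x11 x12 y1 y2) + x12 * (2 - 2 * zz2 x11 x12 y1 y2) - (x11 + x12) ^ 2

/-- Market maker's (Walrasian welfare) utility. -/
def uM (x11 x12 y1 y2 : ℝ) : ℝ :=
  zz1 x11 x12 y1 y2 + 2 * zz2 x11 x12 y1 y2 - (zz1 x11 x12 y1 y2) ^ 2 / 2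
    - (zz2 x11 x12 y1 y2) ^ 2 - (x11 + x12) ^ 2

/-- Nash equilibrium of the two-market game with link capacity `χ` in both directions. -/
def Nash2 (χ x11 x12 y1 y2 : ℝ) : Prop :=
  0 ≤ x11 ∧ 0 ≤ x12 ∧ y1 ∈ Set.Icc 0 χ ∧ y2 ∈ Set.Icc 0 χ ∧
  (∀ a b : ℝ, 0 ≤ a → 0 ≤ b → uP a b y1 y2 ≤ uP x11 x12 y1 y2) ∧
  (∀ w1 w2 : ℝ, w1 ∈ Set.Icc 0 χ → w2 ∈ Set.Icc 0 χ →
    uM x11 x12 w1 w2 ≤ uM x11 x12 y1 y2)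

-- uM depends on (w1 - w2) only
lemma uM_diff (x11 x12 a b c d : ℝ) (h : a - b = c - d) :
    uM x11 x12 a b = uM x11 x12 c d := by
  simp only [uM, zz1, zz2, h]

-- KKT case analysis core
lemma key (χ t x11 x12 : ℝ) (hχ : 1/3 ≤ χ) (hx11 : 0 ≤ x11) (hx12 : 0 ≤ x12)
    (htub : t ≤ χ)
    (hgA : 1 + t - 4*x11 - 2*x12 ≤ 0)
    (hgA' : 0 < x11 → 0 ≤ 1 + t - 4*x11 - 2*x12)
    (hgB : 2 - 2*t - 2*x11 - 6*x12 ≤ 0)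
    (hgB' : 0 < x12 → 0 ≤ 2 - 2*t - 2*x11 - 6*x12)
    (hm1 : t < χ → 1 + x11 - 2*x12 - 3*t ≤ 0)
    (hm2 : -χ < t → 0 ≤ 1 + x11 - 2*x12 - 3*t) :
    x11 = 4/15 ∧ x12 = 2/15 ∧ t = 1/3 := by
  rcases hx11.eq_or_lt with h1 | h1
  · rcases hx12.eq_or_lt with h2 | h2
    · exfalso; linarith
    · exfalso
      have e2 := hgB' h2
      have hm := hm1 (by linarith)
      linarith
  · rcases hx12.eq_or_lt with h2 | h2
    · exfalso
      have e1 := hgA' h1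
      have hm := hm2 (by linarith)
      linarith
    · have e1 := hgA' h1
      have e2 := hgB' h2
      -- so 4x11+2x12 = 1+t, 2x11+6x12 = 2-2t
      have hlt : -χ < t := by linarith
      have hmu := hm2 hlt
      have ht13 : t = 1/3 := by
        rcases htub.lt_or_eq with h | h
        · have := hm1 h; linarith
        · linarith
      refine ⟨by linarith, by linarith, ht13⟩

/-- for capacity `χ ≥ 1/3`, at every Nash equilibrium the quantities are
`(4/15, 2/15)`, the net flow from market 1 to market 2 is `1/3`, and both prices equal
`16/15`. -/
theorem two_market_high_capacity_equilibrium
    (χ : ℝ) (hχ : 1 / 3 ≤ χ) (x11 x12 y1 y2 : ℝ)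
    (hNash : Nash2 χ x11 x12 y1 y2) :
    x11 = 4 / 15 ∧ x12 = 2 / 15 ∧ y1 - y2 = 1 / 3 ∧
    1 - zz1 x11 x12 y1 y2 = 16 / 15 ∧ 2 - 2 * zz2 x11 x12 y1 y2 = 16 / 15 := by
  obtain ⟨hx11, hx12, hy1, hy2, hP, hM⟩ := hNash
  have hχ0 : (0:ℝ) < χ := by linarith
  have htub : y1 - y2 ≤ χ := by have := hy1.2; have := hy2.1; linarith
  have htlb : -χ ≤ y1 - y2 := by have := hy1.1; have := hy2.2; linarith
  -- producer first-order conditions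
  have hgA : 1 + (y1 - y2) - 4*x11 - 2*x12 ≤ 0 := by
    by_contra h
    push_neg at h
    have key := hP (x11 + (1 + (y1 - y2) - 4*x11 - 2*x12)/4) x12 (by linarith) hx12
    simp only [uP, zz1, zz2] at key
    nlinarith [key, mul_pos h h]
  have hgA' : 0 < x11 → 0 ≤ 1 + (y1 - y2) - 4*x11 - 2*x12 := by
    intro hx
    by_contra h
    push_neg at h
    set g := 1 + (y1 - y2) - 4*x11 - 2*x12 with hg
    set e := min x11 (-g/4) with he
    have he0 : 0 < e := lt_min hx (by linarith)
    have he1 : e ≤ x11 := min_le_left _ _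
    have he2 : e ≤ -g/4 := min_le_right _ _
    have key := hP (x11 - e) x12 (by linarith) hx12
    simp only [uP, zz1, zz2] at key
    nlinarith [key, mul_pos he0 he0, mul_le_mul_of_nonneg_left he2 he0.le,
      mul_pos he0 (by linarith : (0:ℝ) < -g)]
  have hgB : 2 - 2*(y1 - y2) - 2*x11 - 6*x12 ≤ 0 := by
    by_contra h
    push_neg at h
    have key := hP x11 (x12 + (2 - 2*(y1 - y2) - 2*x11 - 6*x12)/6) hx11 (by linarith)
    simp only [uP, zz1, zz2] at key
    nlinarith [key, mul_pos h h]
  have hgB' : 0 < x12 → 0 ≤ 2 - 2*(y1 - y2) - 2*x11 - 6*x12 := by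
    intro hx
    by_contra h
    push_neg at h
    set g := 2 - 2*(y1 - y2) - 2*x11 - 6*x12 with hg
    set e := min x12 (-g/6) with he
    have he0 : 0 < e := lt_min hx (by linarith)
    have he1 : e ≤ x12 := min_le_left _ _
    have he2 : e ≤ -g/6 := min_le_right _ _
    have key := hP x11 (x12 - e) hx11 (by linarith)
    simp only [uP, zz1, zz2] at key
    nlinarith [key, mul_pos he0 he0, mul_le_mul_of_nonneg_left he2 he0.le,
      mul_pos he0 (by linarith : (0:ℝ) < -g)]
  -- market maker first-order conditions
  have hmm : ∀ s : ℝ, -χ ≤ s → s ≤ χ → uM x11 x12 s 0 ≤ uM x11 x12 (y1 - y2) 0 := by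
    intro s hs1 hs2
    have hw1 : max s 0 ∈ Set.Icc 0 χ := ⟨le_max_right _ _, max_le hs2 hχ0.le⟩
    have hw2 : max (-s) 0 ∈ Set.Icc 0 χ := ⟨le_max_right _ _, max_le (by linarith) hχ0.le⟩
    have hd : max s 0 - max (-s) 0 = s - 0 := by
      rcases le_total 0 s with h | h
      · rw [max_eq_left h, max_eq_right (by linarith : -s ≤ 0)]
      · rw [max_eq_right h, max_eq_left (by linarith : 0 ≤ -s)]; ring
    have := hM (max s 0) (max (-s) 0) hw1 hw2
    rwa [uM_diff x11 x12 (max s 0) (max (-s) 0) s 0 hd,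
      uM_diff x11 x12 y1 y2 (y1 - y2) 0 (by ring)] at this
  have hm1 : y1 - y2 < χ → 1 + x11 - 2*x12 - 3*(y1 - y2) ≤ 0 := by
    intro hlt
    by_contra h
    push_neg at h
    set m := 1 + x11 - 2*x12 - 3*(y1 - y2) with hmdef
    set e := min (χ - (y1 - y2)) (m/3) with he
    have he0 : 0 < e := lt_min (by linarith) (by linarith)
    have he1 : e ≤ χ - (y1 - y2) := min_le_left _ _
    have he2 : e ≤ m/3 := min_le_right _ _
    have key := hmm ((y1 - y2) + e) (by linarith) (by linarith)
    simp only [uM, zz1, zz2] at key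
    nlinarith [key, mul_pos he0 he0, mul_le_mul_of_nonneg_left he2 he0.le]
  have hm2 : -χ < y1 - y2 → 0 ≤ 1 + x11 - 2*x12 - 3*(y1 - y2) := by
    intro hlt
    by_contra h
    push_neg at h
    set m := 1 + x11 - 2*x12 - 3*(y1 - y2) with hmdef
    set e := min ((y1 - y2) + χ) (-m/3) with he
    have he0 : 0 < e := lt_min (by linarith) (by linarith)
    have he1 : e ≤ (y1 - y2) + χ := min_le_left _ _
    have he2 : e ≤ -m/3 := min_le_right _ _
    have key := hmm ((y1 - y2) - e) (by linarith) (by linarith)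
    simp only [uM, zz1, zz2] at key
    nlinarith [key, mul_pos he0 he0, mul_le_mul_of_nonneg_left he2 he0.le]
  obtain ⟨h1, h2, h3⟩ := key χ (y1 - y2) x11 x12 hχ hx11 hx12 htub hgA hgA' hgB hgB' hm1 hm2
  refine ⟨h1, h2, h3, ?_, ?_⟩
  · simp only [zz1, h1, h3]; norm_num
  · simp only [zz2, h2, h3]; norm_num
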